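/- Let m ≥ 1 and let A be the m×m WSGD Toeplitz matrix built from the weights w_k for (p,q)=(1,-1) of order α. If 1 ≤ α ≤ 2, then every complex eigenvalue λ of A satisfies Re(λ) < 0. If moreover 1 < α ≤ 2, then A is negative definite, i.e., xᵀ A x < 0 for every nonzero x ∈ ℝ^m. -/

import Mathlib

open Matrix

/-- Grünwald coefficients `g_k = (-1)^k * binom(α, k)`. -/
noncomputable def gru (α : ℝ) (k : ℕ) : ℝ :=
  (-1 : ℝ) ^ k * (∏ i ∈ Finset.range k, (α - (i : ℝ))) / (Nat.factorial k : ℝ)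

/-- WSGD weights for `(p,q) = (1,0)`. -/
noncomputable def w10 (α : ℝ) : ℕ → ℝ
  | 0 => α / 2 * gru α 0
  | k + 1 => α / 2 * gru α (k + 1) + (2 - α) / 2 * gru α k

/-- WSGD weights for `(p,q) = (1,-1)`. -/
noncomputable def w1m1 (α : ℝ) : ℕ → ℝ
  | 0 => (2 + α) / 4 * gru α 0
  | 1 => (2 + α) / 4 * gru α 1
  | k + 2 => (2 + α) / 4 * gru α (k + 2) + (2 - α) / 4 * gru α k

/-- The m×m WSGD Toeplitz matrix: `A i j = w (i - j + 1)` when `i - j + 1 ≥ 0`, else `0`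
(0-based indices give the same entries as the 1-based description). -/
noncomputable def wsgdMatrix (w : ℕ → ℝ) (m : ℕ) : Matrix (Fin m) (Fin m) ℝ :=
  Matrix.of fun i j => if (j : ℕ) ≤ (i : ℕ) + 1 then w ((i : ℕ) + 1 - (j : ℕ)) else 0

/-!
Extend `x` by zero to `z : ℤ → ℝ` and let `c d = ∑ₙ z (n + d) z n` be its autocorrelation. The
quadratic form `Q x = xᵀ A x` equals `∑ₖ wₖ c (k - 1)`. Write `wₖ = (2+α)/4 gₖ + (2-α)/4 gₖ₋₂`;
for `1 ≤ α ≤ 2` the coefficients `gₖ`, `k ≥ 2`, are nonnegative with sum at most `α - 1`, and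
`c d ≤ c 0`, so the form is at most
`-(α-1)² (c 0 - c 1) - (2-α)α/4 (3 c 0 - 4 c 1 + c 2)`.
For `z ≠ 0` both brackets are positive: `2 (c 0 - c 1)` is the autocorrelation at `0` of the
forward difference `Δz ≠ 0`, and `3 c 0 - 4 c 1 + c 2` is `c 0 - c 1` computed for `Δz`.
For a complex eigenpair, `Re λ · ‖v‖² = Q (Re v) + Q (Im v) < 0`.
-/

section Grunwald

open Finset

lemma gru_zero (α : ℝ) : gru α 0 = 1 := by simp [gru]

lemma gru_one (α : ℝ) : gru α 1 = -α := by simp [gru]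

lemma gru_succ (α : ℝ) (k : ℕ) : gru α (k + 1) = gru α k * ((k - α) / (k + 1)) := by
  simp only [gru, prod_range_succ, Nat.factorial_succ, pow_succ]
  push_cast
  field_simp
  ring

lemma mul_gru_sub_one (α : ℝ) (k : ℕ) : α * gru (α - 1) k = (α - k) * gru α k := by
  have hprod : α * ∏ i ∈ range k, (α - 1 - i) = (α - k) * ∏ i ∈ range k, (α - i) := by
    have h₁ := prod_range_succ' (fun i : ℕ => α - i) k
    rw [prod_range_succ] at h₁
    simp only [Nat.cast_add, Nat.cast_one, Nat.cast_zero, sub_zero, sub_add_eq_sub_sub_swap] at h₁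
    linarith
  simp only [gru]
  field_simp
  linear_combination hprod

lemma sum_range_gru (α : ℝ) (N : ℕ) : ∑ k ∈ range (N + 1), gru α k = gru (α - 1) N := by
  induction N with
  | zero => simp [gru_zero]
  | succ N ih =>
    rw [sum_range_succ, ih, gru_succ α N, gru_succ (α - 1) N]
    field_simp
    linear_combination mul_gru_sub_one α N

lemma gru_succ_nonpos {β : ℝ} (h0 : 0 ≤ β) (h1 : β ≤ 1) (k : ℕ) : gru β (k + 1) ≤ 0 := by
  induction k with
  | zero => simpa [gru_one] using h0
  | succ k ih =>
    rw [gru_succ]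
    exact mul_nonpos_of_nonpos_of_nonneg ih (div_nonneg (by push_cast; linarith) (by positivity))

lemma gru_add_two_nonneg {α : ℝ} (h1 : 1 ≤ α) (h2 : α ≤ 2) (k : ℕ) : 0 ≤ gru α (k + 2) := by
  induction k with
  | zero =>
    rw [gru_succ, gru_one]
    exact mul_nonneg_of_nonpos_of_nonpos (by linarith)
      (div_nonpos_of_nonpos_of_nonneg (by simp; linarith) (by positivity))
  | succ k ih =>
    rw [show k + 1 + 2 = k + 2 + 1 by ring, gru_succ]
    exact mul_nonneg ih (div_nonneg (by push_cast; linarith) (by positivity))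

lemma sum_range_gru_add_two_le {α : ℝ} (h1 : 1 ≤ α) (h2 : α ≤ 2) (n : ℕ) :
    ∑ k ∈ range n, gru α (k + 2) ≤ α - 1 := by
  have h := sum_range_gru α (n + 1)
  rw [sum_range_succ', sum_range_succ', gru_zero, gru_one] at h
  have := gru_succ_nonpos (β := α - 1) (by linarith) (by linarith) n
  linarith

end Grunwald

section Autocorrelation

open Function
open scoped fwdDiff

noncomputable def autocorr (z : ℤ → ℝ) (d : ℤ) : ℝ := ∑' n, z (n + d) * z n

variable {z : ℤ → ℝ}

lemma autocorr_neg (d : ℤ) : autocorr z (-d) = autocorr z d := by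
  rw [autocorr, ← (Equiv.addRight d).tsum_eq]
  simp [autocorr, mul_comm]

lemma autocorr_zero_nonneg : 0 ≤ autocorr z 0 :=
  tsum_nonneg fun n => by simpa using mul_self_nonneg (z n)

lemma hasSum_autocorr (hz : z.HasFiniteSupport) (d : ℤ) :
    HasSum (fun n => z (n + d) * z n) (autocorr z d) :=
  (summable_of_hasFiniteSupport (hz.fun_mul_right fun n => z (n + d))).hasSum

lemma hasSum_autocorr_shift (hz : z.HasFiniteSupport) (a d : ℤ) :
    HasSum (fun n => z (n + a + d) * z (n + a)) (autocorr z d) :=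
  (Equiv.addRight a).hasSum_iff.2 (hasSum_autocorr hz d)

lemma autocorr_le_autocorr_zero (hz : z.HasFiniteSupport) (d : ℤ) :
    autocorr z d ≤ autocorr z 0 := by
  have hsq := ((hasSum_autocorr_shift hz d 0).add (hasSum_autocorr hz 0)).div_const 2
  have := hasSum_le (fun n => ?_) (hasSum_autocorr hz d) hsq
  · linarith
  simp only [add_zero]
  nlinarith [sq_nonneg (z (n + d) - z n)]

lemma autocorr_fwdDiff (hz : z.HasFiniteSupport) (d : ℤ) :
    autocorr (Δ_[1] z) d = 2 * autocorr z d - autocorr z (d + 1) - autocorr z (d - 1) := by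
  have h := (((hasSum_autocorr_shift hz 1 d).sub (hasSum_autocorr_shift hz 0 (d + 1))).sub
    (hasSum_autocorr_shift hz 1 (d - 1))).add (hasSum_autocorr_shift hz 0 d)
  convert h.tsum_eq using 1
  · rw [autocorr]
    congr 1
    funext n
    simp only [fwdDiff]
    ring_nf
  · ring

lemma eq_zero_of_fwdDiff_eq_zero (hz : z.HasFiniteSupport) (h : Δ_[1] z = 0) : z = 0 := by
  have hconst : ∀ n, z n = z 0 := fun n => by
    induction n using Int.induction_on with
    | zero => rfl
    | succ i ih => rw [← ih, ← sub_eq_zero]; exact congrFun h i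
    | pred i ih =>
      have := congrFun h (-i - 1)
      simp only [fwdDiff, Pi.zero_apply, sub_add_cancel] at this
      linarith
  obtain ⟨n, hn⟩ := hz.exists_notMem
  funext k
  rw [hconst, ← hconst n]
  simpa using hn

lemma Function.HasFiniteSupport.fwdDiff (hz : z.HasFiniteSupport) : (Δ_[1] z).HasFiniteSupport :=
  (hz.fun_comp_of_injective (add_left_injective 1)).sub hz

lemma autocorr_one_lt_autocorr_zero (hz : z.HasFiniteSupport) (h : z ≠ 0) :
    autocorr z 1 < autocorr z 0 := by
  have hΔ : Δ_[1] z ≠ 0 := fun h' => h (eq_zero_of_fwdDiff_eq_zero hz h')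
  obtain ⟨n, hn⟩ := Function.ne_iff.1 hΔ
  have hpos : 0 < autocorr (Δ_[1] z) 0 :=
    (hasSum_autocorr hz.fwdDiff 0).summable.tsum_pos (fun k => by simpa using mul_self_nonneg _) n
      (by simpa using mul_self_pos.2 hn)
  have := autocorr_fwdDiff hz 0
  rw [zero_sub, autocorr_neg, zero_add] at this
  linarith

lemma four_mul_autocorr_one_lt (hz : z.HasFiniteSupport) (h : z ≠ 0) :
    4 * autocorr z 1 < 3 * autocorr z 0 + autocorr z 2 := by
  have hΔ : Δ_[1] z ≠ 0 := fun h' => h (eq_zero_of_fwdDiff_eq_zero hz h')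
  have := autocorr_one_lt_autocorr_zero hz.fwdDiff hΔ
  rw [autocorr_fwdDiff hz, autocorr_fwdDiff hz] at this
  norm_num [autocorr_neg] at this
  linarith

end Autocorrelation

section ZeroExtension

open Finset Function

variable {m : ℕ} (x : Fin m → ℝ)

lemma Fin.natCast_val_injective : Injective (fun i : Fin m => ((i : ℕ) : ℤ)) :=
  Nat.cast_injective.comp Fin.val_injective

noncomputable def zeroExtend : ℤ → ℝ := extend (fun i : Fin m => ((i : ℕ) : ℤ)) x 0

lemma zeroExtend_natCast_val (i : Fin m) : zeroExtend x ((i : ℕ) : ℤ) = x i :=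
  Fin.natCast_val_injective.extend_apply x 0 i

lemma zeroExtend_of_notMem_range {n : ℤ} (h : ¬∃ i : Fin m, ((i : ℕ) : ℤ) = n) :
    zeroExtend x n = 0 :=
  extend_apply' _ _ _ h

lemma zeroExtend_eq_sum (n : ℤ) :
    zeroExtend x n = ∑ i : Fin m, if ((i : ℕ) : ℤ) = n then x i else 0 := by
  by_cases h : ∃ i : Fin m, ((i : ℕ) : ℤ) = n
  · obtain ⟨i, rfl⟩ := h
    simp [zeroExtend_natCast_val, Fin.val_inj]
  · rw [zeroExtend_of_notMem_range x h]
    exact (sum_eq_zero fun i _ => if_neg fun hi => h ⟨i, hi⟩).symm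

lemma hasFiniteSupport_zeroExtend : (zeroExtend x).HasFiniteSupport :=
  (Set.finite_range _).subset fun _ hn => by_contra fun h => hn (zeroExtend_of_notMem_range x h)

lemma zeroExtend_ne_zero {x : Fin m → ℝ} (hx : x ≠ 0) : zeroExtend x ≠ 0 :=
  fun h => hx (funext fun i => by simpa [zeroExtend_natCast_val] using congrFun h i)

lemma autocorr_zeroExtend (d : ℤ) :
    autocorr (zeroExtend x) d = ∑ i : Fin m, zeroExtend x ((i : ℕ) + d) * x i := by
  rw [autocorr, ← Fin.natCast_val_injective.tsum_eq, tsum_fintype]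
  · exact sum_congr rfl fun i _ => by rw [zeroExtend_natCast_val]
  · exact (support_mul_subset_right _ _).trans fun n hn =>
      by_contra fun h => hn (zeroExtend_of_notMem_range x h)

lemma vecMul_wsgdMatrix (w : ℕ → ℝ) {N : ℕ} (hN : m ≤ N) (j : Fin m) :
    (x ᵥ* wsgdMatrix w m) j = ∑ k ∈ range (N + 1), w k * zeroExtend x ((j : ℕ) + k - 1) := by
  simp only [zeroExtend_eq_sum, mul_sum, vecMul, dotProduct, wsgdMatrix, of_apply]
  rw [sum_comm]
  refine sum_congr rfl fun i _ => ?_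
  split_ifs with h
  · rw [sum_eq_single_of_mem ((i : ℕ) + 1 - j) (mem_range.2 (by omega))]
    · rw [if_pos (by omega)]
      ring
    · intro k _ hk
      rw [if_neg (by omega), mul_zero]
  · rw [mul_zero]
    exact (sum_eq_zero fun k _ => by rw [if_neg (by omega), mul_zero]).symm

lemma dotProduct_wsgdMatrix_mulVec (w : ℕ → ℝ) {N : ℕ} (hN : m ≤ N) :
    x ⬝ᵥ wsgdMatrix w m *ᵥ x = ∑ k ∈ range (N + 1), w k * autocorr (zeroExtend x) (k - 1) := by
  rw [dotProduct_mulVec]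
  simp only [dotProduct, vecMul_wsgdMatrix x w hN, autocorr_zeroExtend, sum_mul, mul_sum]
  rw [sum_comm]
  refine sum_congr rfl fun k _ => sum_congr rfl fun j _ => ?_
  ring_nf

end ZeroExtension

section WSGD

open Finset

variable {α : ℝ} {z : ℤ → ℝ}

lemma sum_gru_add_two_mul_autocorr_le (h1 : 1 ≤ α) (h2 : α ≤ 2) (hz : z.HasFiniteSupport)
    (n : ℕ) (s : ℤ) :
    ∑ k ∈ range n, gru α (k + 2) * autocorr z (k + s) ≤ (α - 1) * autocorr z 0 :=
  calc ∑ k ∈ range n, gru α (k + 2) * autocorr z (k + s)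
      ≤ ∑ k ∈ range n, gru α (k + 2) * autocorr z 0 :=
        sum_le_sum fun k _ => mul_le_mul_of_nonneg_left (autocorr_le_autocorr_zero hz _)
          (gru_add_two_nonneg h1 h2 k)
    _ ≤ (α - 1) * autocorr z 0 := by
        rw [← sum_mul]
        exact mul_le_mul_of_nonneg_right (sum_range_gru_add_two_le h1 h2 n) autocorr_zero_nonneg

lemma sum_w1m1_mul_autocorr_eq (n : ℕ) :
    ∑ k ∈ range (n + 4), w1m1 α k * autocorr z (k - 1) =
      (2 + α) / 4 * (autocorr z 1 - α * autocorr z 0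
          + ∑ k ∈ range (n + 2), gru α (k + 2) * autocorr z (k + 1))
        + (2 - α) / 4 * (autocorr z 1 - α * autocorr z 2
          + ∑ k ∈ range n, gru α (k + 2) * autocorr z (k + 3)) := by
  have hshift : ∑ k ∈ range (n + 2), gru α k * autocorr z (k + 1) =
      autocorr z 1 - α * autocorr z 2 + ∑ k ∈ range n, gru α (k + 2) * autocorr z (k + 3) := by
    rw [sum_range_succ', sum_range_succ', gru_zero, gru_one]
    push_cast
    ring_nf
  rw [sum_range_succ', sum_range_succ']
  simp only [w1m1, add_mul, sum_add_distrib, mul_assoc, ← mul_sum]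
  push_cast
  simp only [add_sub_cancel_right]
  rw [hshift, gru_zero, gru_one, autocorr_neg]
  ring

lemma sum_w1m1_mul_autocorr_neg (h1 : 1 ≤ α) (h2 : α ≤ 2) (hz : z.HasFiniteSupport) (hz0 : z ≠ 0)
    (n : ℕ) : ∑ k ∈ range (n + 4), w1m1 α k * autocorr z (k - 1) < 0 := by
  have hT₁ := sum_gru_add_two_mul_autocorr_le h1 h2 hz (n + 2) 1
  have hT₂ := sum_gru_add_two_mul_autocorr_le h1 h2 hz n 3
  have hD := autocorr_one_lt_autocorr_zero hz hz0
  have hE := four_mul_autocorr_one_lt hz hz0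
  rw [sum_w1m1_mul_autocorr_eq]
  calc _ ≤ (2 + α) / 4 * (autocorr z 1 - α * autocorr z 0 + (α - 1) * autocorr z 0)
        + (2 - α) / 4 * (autocorr z 1 - α * autocorr z 2 + (α - 1) * autocorr z 0) :=
        add_le_add (mul_le_mul_of_nonneg_left (by linarith) (by linarith))
          (mul_le_mul_of_nonneg_left (by linarith) (by linarith))
    _ = -((α - 1) ^ 2 * (autocorr z 0 - autocorr z 1))
        - (2 - α) * α / 4 * (3 * autocorr z 0 - 4 * autocorr z 1 + autocorr z 2) := by ring
    _ < 0 := by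
      rcases h2.lt_or_eq with h2 | rfl
      · have := mul_pos (div_pos (mul_pos (sub_pos.2 h2) (by linarith : (0 : ℝ) < α)) four_pos)
          (sub_pos.2 hE)
        linarith [mul_nonneg (sq_nonneg (α - 1)) (sub_pos.2 hD).le]
      · norm_num
        linarith

end WSGD

section Eigenvalues

open Finset

lemma Matrix.re_star_dotProduct_map_ofReal_mulVec {n : Type*} [Fintype n] (A : Matrix n n ℝ)
    (v : n → ℂ) :
    (star v ⬝ᵥ A.map Complex.ofReal *ᵥ v).re =
      (fun i => (v i).re) ⬝ᵥ A *ᵥ (fun i => (v i).re) +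
        (fun i => (v i).im) ⬝ᵥ A *ᵥ (fun i => (v i).im) := by
  simp only [dotProduct, mulVec, Complex.re_sum, mul_sum, ← sum_add_distrib]
  refine sum_congr rfl fun i _ => sum_congr rfl fun j _ => ?_
  simp [Complex.mul_re]

lemma Matrix.re_lt_zero_of_forall_dotProduct_mulVec_neg {n : Type*} [Fintype n]
    {A : Matrix n n ℝ} (hA : ∀ x, x ≠ 0 → x ⬝ᵥ A *ᵥ x < 0) {μ : ℂ} {v : n → ℂ} (hv : v ≠ 0)
    (hμ : A.map Complex.ofReal *ᵥ v = μ • v) : μ.re < 0 := by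
  have hQ : ∀ x, x ⬝ᵥ A *ᵥ x ≤ 0 := fun x => by
    rcases eq_or_ne x 0 with rfl | hx
    · simp
    · exact (hA x hx).le
  have hnorm : 0 < ∑ i, Complex.normSq (v i) := by
    obtain ⟨i, hi⟩ := Function.ne_iff.1 hv
    exact sum_pos' (fun j _ => Complex.normSq_nonneg _) ⟨i, mem_univ _, Complex.normSq_pos.2 hi⟩
  have hre := A.re_star_dotProduct_map_ofReal_mulVec v
  rw [hμ, dotProduct_smul] at hre
  have hvv : star v ⬝ᵥ v = ((∑ i, Complex.normSq (v i) : ℝ) : ℂ) := by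
    simp [dotProduct, Complex.normSq_eq_conj_mul_self]
  rw [hvv, smul_eq_mul, Complex.re_mul_ofReal] at hre
  by_contra! hμ0
  have hsum := mul_nonneg hμ0 hnorm.le
  have hre0 : (fun i => (v i).re) = 0 := by_contra fun h => by
    linarith [hA _ h, hQ fun i => (v i).im]
  have him0 : (fun i => (v i).im) = 0 := by_contra fun h => by
    linarith [hA _ h, hQ fun i => (v i).re]
  exact hv (funext fun i => Complex.ext (congrFun hre0 i) (congrFun him0 i))

end Eigenvalues

lemma dotProduct_wsgdMatrix_w1m1_mulVec_neg {α : ℝ} (h1 : 1 ≤ α) (h2 : α ≤ 2) {m : ℕ}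
    {x : Fin m → ℝ} (hx : x ≠ 0) : x ⬝ᵥ wsgdMatrix (w1m1 α) m *ᵥ x < 0 := by
  rw [dotProduct_wsgdMatrix_mulVec x _ (m.le_add_right 3)]
  exact sum_w1m1_mul_autocorr_neg h1 h2 (hasFiniteSupport_zeroExtend x) (zeroExtend_ne_zero hx) m

theorem wsgd1m1_matrix_eigenvalues_general (α : ℝ) (m : ℕ) :
    (1 ≤ α → α ≤ 2 →
      ∀ lam : ℂ,
        (∃ v : Fin m → ℂ, v ≠ 0 ∧
          ((wsgdMatrix (w1m1 α) m).map Complex.ofReal).mulVec v = lam • v) → lam.re < 0) ∧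
    (1 < α → α ≤ 2 →
      ∀ x : Fin m → ℝ, x ≠ 0 → x ⬝ᵥ (wsgdMatrix (w1m1 α) m).mulVec x < 0) :=
  ⟨fun h1 h2 _ ⟨_, hv, hev⟩ => re_lt_zero_of_forall_dotProduct_mulVec_neg
      (fun _ => dotProduct_wsgdMatrix_w1m1_mulVec_neg h1 h2) hv hev,
    fun h1 h2 _ => dotProduct_wsgdMatrix_w1m1_mulVec_neg h1.le h2⟩

theorem wsgd1m1_matrix_eigenvalues (α : ℝ) (m : ℕ) (hm : 1 ≤ m) :
    (1 ≤ α → α ≤ 2 →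
      ∀ lam : ℂ,
        (∃ v : Fin m → ℂ, v ≠ 0 ∧
          ((wsgdMatrix (w1m1 α) m).map Complex.ofReal).mulVec v = lam • v) → lam.re < 0) ∧
    (1 < α → α ≤ 2 →
      ∀ x : Fin m → ℝ, x ≠ 0 → x ⬝ᵥ (wsgdMatrix (w1m1 α) m).mulVec x < 0) :=
  wsgd1m1_matrix_eigenvalues_general α m
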